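/- Let Σ and Σ̂ be transitive partitions such that Σ̂ weakly cart-imitates Σ via a bijection β : Σ → Σ̂. Then for all X, Y, Z ⊆ Σ: if ⋃X ⊆ (⋃Y) ⊗ (⋃Z), then ⋃β[X] ⊆ (⋃β[Y]) ⊗ (⋃β[Z]). -/

import Mathlib

open ZFSet

/-- A partition: a collection (as a ZFC set) of pairwise disjoint nonempty sets. -/
def IsPartition (S : ZFSet) : Prop :=
  (∀ σ ∈ S, σ ≠ (∅ : ZFSet)) ∧
    ∀ σ ∈ S, ∀ τ ∈ S, σ ≠ τ → σ ∩ τ = (∅ : ZFSet)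

/-- A transitive partition: a partition whose domain `⋃₀ S` is a transitive set. -/
def IsTransPartition (S : ZFSet) : Prop :=
  IsPartition S ∧ (⋃₀ S : ZFSet).IsTransitive

/-- `P*(X)`: the set of nonempty subsets of `⋃₀ X` meeting every block of `X`. -/
def powStar (X : ZFSet) : ZFSet :=
  ZFSet.sep (fun y => y ≠ (∅ : ZFSet) ∧ ∀ σ ∈ X, y ∩ σ ≠ (∅ : ZFSet))
    (ZFSet.powerset (⋃₀ X))

/-- `P*(X)_{1,2}`: the elements of `P*(X)` of cardinality 1 or 2. -/
def powStar12 (X : ZFSet) : ZFSet :=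
  ZFSet.sep (fun y => ∃ a b : ZFSet, y = insert a ({b} : ZFSet)) (powStar X)

/-- Unordered Cartesian product `S ⊗ T = {{s,t} : s ∈ S, t ∈ T}`. -/
def otimes (S T : ZFSet) : ZFSet :=
  ZFSet.sep (fun y => ∃ s ∈ S, ∃ t ∈ T, y = insert s ({t} : ZFSet))
    (ZFSet.powerset (S ∪ T))

/-- Image of a ZFC set under an arbitrary class function (classically definable). -/
noncomputable def zimg (f : ZFSet → ZFSet) (x : ZFSet) : ZFSet :=
  @ZFSet.image f (Classical.allZFSetDefinable _) x

/-- `Sh` weakly cart-imitates `Sg` via the bijection `β`. -/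
def WCartImitates (Sh Sg : ZFSet) (β : ZFSet → ZFSet) : Prop :=
  -- `β` is a bijection from the blocks of `Sg` onto the blocks of `Sh`
  (∀ σ : ZFSet, σ ∈ Sg → β σ ∈ Sh) ∧
  (∀ σ : ZFSet, σ ∈ Sg → ∀ τ : ZFSet, τ ∈ Sg → β σ = β τ → σ = τ) ∧
  (∀ τ : ZFSet, τ ∈ Sh → ∃ σ : ZFSet, σ ∈ Sg ∧ β σ = τ) ∧
  ∀ X : ZFSet, X ⊆ Sg → ∀ σ : ZFSet, σ ∈ Sg →
    -- (i)
    (powStar (zimg β X) ∩ β σ ≠ (∅ : ZFSet) → powStar X ∩ σ ≠ (∅ : ZFSet)) ∧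
    -- (ii)
    ((⋃₀ zimg β X : ZFSet) ∈ β σ ↔ (⋃₀ X : ZFSet) ∈ σ) ∧
    -- (iii)
    (powStar12 (zimg β X) ∩ β σ ≠ (∅ : ZFSet) ↔ powStar12 X ∩ σ ≠ (∅ : ZFSet)) ∧
    ((powStar (zimg β X) \ powStar12 (zimg β X)) ∩ β σ ≠ (∅ : ZFSet) ↔
      (powStar X \ powStar12 X) ∩ σ ≠ (∅ : ZFSet))

/-- `Sh` cart-imitates `Sg` via `β`: weak cart-imitation together with the
cart-saturated condition (iv). -/
def CartImitates (Sh Sg : ZFSet) (β : ZFSet → ZFSet) : Prop :=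
  WCartImitates Sh Sg β ∧
    ∀ X : ZFSet, X ⊆ Sg → powStar12 X ⊆ (⋃₀ Sg : ZFSet) →
      powStar12 (zimg β X) ⊆ (⋃₀ zimg β Sg : ZFSet)

/-!
Whether `⋃X ⊆ ⋃Y ⊗ ⋃Z` holds can be read off, block by block, from exactly the data that weak
cart-imitation preserves. If every element of a block `σ ∈ X` is a pair `{s, t}` with `s ∈ τ₁ ∈ Y`
and `t ∈ τ₂ ∈ Z`, then `∅ ∉ σ`, `σ` meets no `P*(W) \ P*(W)_{1,2}`, and `σ` meets `P*(W)_{1,2}`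
only for `W = {τ₁, τ₂}`, since a pair meets precisely the blocks of its two elements. Conversely,
in a transitive partition every `u ∈ σ` lies in `P*(W)` for `W` the set of blocks it meets, so
these three conditions force `u ∈ P*({τ₁, τ₂})_{1,2} ⊆ τ₁ ⊗ τ₂`. Conditions (ii) (for the empty
family) and (iii), with the surjectivity of `β`, carry the three conditions from `σ` to `β σ`.
-/

namespace ZFSet

theorem ne_empty_iff_exists_mem {x : ZFSet} : x ≠ ∅ ↔ ∃ y, y ∈ x := by
  simp only [Ne, eq_empty, not_forall, not_not]

theorem inter_ne_empty_iff {x y : ZFSet} : x ∩ y ≠ ∅ ↔ ∃ z, z ∈ x ∧ z ∈ y := by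
  simp only [ne_empty_iff_exists_mem, mem_inter]

end ZFSet

theorem mem_zimg {f : ZFSet → ZFSet} {x y : ZFSet} : y ∈ zimg f x ↔ ∃ a ∈ x, f a = y :=
  @ZFSet.mem_image f (Classical.allZFSetDefinable _) x y

theorem zimg_empty (f : ZFSet → ZFSet) : zimg f ∅ = ∅ :=
  (eq_empty _).2 fun _ hy => by
    obtain ⟨a, ha, -⟩ := mem_zimg.1 hy
    exact notMem_empty a ha

theorem zimg_pair (f : ZFSet → ZFSet) (a b : ZFSet) : zimg f {a, b} = {f a, f b} := by
  ext y
  simp only [mem_zimg, mem_pair]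
  constructor
  · rintro ⟨c, rfl | rfl, rfl⟩ <;> simp
  · rintro (rfl | rfl)
    exacts [⟨a, Or.inl rfl, rfl⟩, ⟨b, Or.inr rfl, rfl⟩]

theorem zimg_subset {f : ZFSet → ZFSet} {X S T : ZFSet} (hf : ∀ σ ∈ S, f σ ∈ T) (hX : X ⊆ S) :
    zimg f X ⊆ T := fun _ hy => by
  obtain ⟨σ, hσ, rfl⟩ := mem_zimg.1 hy
  exact hf σ (hX hσ)

theorem exists_subset_zimg_eq {f : ZFSet → ZFSet} {S T W' : ZFSet}
    (hf : ∀ τ ∈ T, ∃ σ ∈ S, f σ = τ) (hW' : W' ⊆ T) : ∃ W ⊆ S, zimg f W = W' := by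
  refine ⟨S.sep (f · ∈ W'), sep_subset, ?_⟩
  ext τ
  constructor
  · intro hτ
    obtain ⟨σ, hσ, rfl⟩ := mem_zimg.1 hτ
    exact (mem_sep.1 hσ).2
  · intro hτ
    obtain ⟨σ, hσ, rfl⟩ := hf τ (hW' hτ)
    exact mem_zimg.2 ⟨σ, mem_sep.2 ⟨hσ, hτ⟩, rfl⟩

theorem mem_otimes {S T u : ZFSet} : u ∈ otimes S T ↔ ∃ s ∈ S, ∃ t ∈ T, u = {s, t} := by
  refine ⟨fun h => (mem_sep.1 h).2, ?_⟩
  rintro ⟨s, hs, t, ht, rfl⟩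
  refine mem_sep.2 ⟨mem_powerset.2 fun z hz => ?_, s, hs, t, ht, rfl⟩
  rcases mem_pair.1 hz with rfl | rfl
  exacts [mem_union.2 (Or.inl hs), mem_union.2 (Or.inr ht)]

theorem otimes_mono {S S' T T' : ZFSet} (hS : S ⊆ S') (hT : T ⊆ T') :
    otimes S T ⊆ otimes S' T' := fun _ hu => by
  obtain ⟨s, hs, t, ht, rfl⟩ := mem_otimes.1 hu
  exact mem_otimes.2 ⟨s, hS hs, t, hT ht, rfl⟩

theorem mem_powStar {W u : ZFSet} :
    u ∈ powStar W ↔ u ⊆ ⋃₀ W ∧ u ≠ ∅ ∧ ∀ τ ∈ W, u ∩ τ ≠ ∅ := by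
  rw [powStar, mem_sep, mem_powerset]

theorem mem_powStar12 {W u : ZFSet} :
    u ∈ powStar12 W ↔ u ∈ powStar W ∧ ∃ a b : ZFSet, u = {a, b} :=
  mem_sep

theorem mem_otimes_of_mem_powStar12_pair {τ₁ τ₂ u : ZFSet} (hu : u ∈ powStar12 {τ₁, τ₂}) :
    u ∈ otimes τ₁ τ₂ := by
  obtain ⟨hu, a, b, rfl⟩ := mem_powStar12.1 hu
  obtain ⟨hsub, -, hmeet⟩ := mem_powStar.1 hu
  rw [sUnion_pair] at hsub
  have ha := mem_union.1 (hsub (mem_pair.2 (Or.inl rfl)))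
  have hb := mem_union.1 (hsub (mem_pair.2 (Or.inr rfl)))
  have hba : ({b, a} : ZFSet) = {a, b} := by ext; simp only [mem_pair]; tauto
  have h₁₂ : a ∈ τ₁ → b ∈ τ₂ → {a, b} ∈ otimes τ₁ τ₂ := fun h₁ h₂ =>
    mem_otimes.2 ⟨a, h₁, b, h₂, rfl⟩
  have h₂₁ : b ∈ τ₁ → a ∈ τ₂ → {a, b} ∈ otimes τ₁ τ₂ := fun h₁ h₂ =>
    mem_otimes.2 ⟨b, h₁, a, h₂, hba.symm⟩
  obtain ⟨c₁, hc₁, hc₁τ⟩ := inter_ne_empty_iff.1 (hmeet τ₁ (mem_pair.2 (Or.inl rfl)))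
  obtain ⟨c₂, hc₂, hc₂τ⟩ := inter_ne_empty_iff.1 (hmeet τ₂ (mem_pair.2 (Or.inr rfl)))
  rcases mem_pair.1 hc₁ with rfl | rfl <;> rcases mem_pair.1 hc₂ with rfl | rfl <;>
    tauto

namespace IsPartition

theorem eq_of_mem_of_mem {S τ τ' s : ZFSet} (hS : IsPartition S) (hτ : τ ∈ S)
    (hτ' : τ' ∈ S) (hs : s ∈ τ) (hs' : s ∈ τ') : τ = τ' := by
  by_contra hne
  have hs'' : s ∈ τ ∩ τ' := mem_inter.2 ⟨hs, hs'⟩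
  rw [hS.2 τ hτ τ' hτ' hne] at hs''
  exact notMem_empty s hs''

theorem eq_pair_of_pair_mem_powStar {S W τ₁ τ₂ s t : ZFSet} (hS : IsPartition S) (hW : W ⊆ S)
    (hτ₁ : τ₁ ∈ S) (hτ₂ : τ₂ ∈ S) (hs : s ∈ τ₁) (ht : t ∈ τ₂) (hst : {s, t} ∈ powStar W) :
    W = {τ₁, τ₂} := by
  obtain ⟨hsub, -, hmeet⟩ := mem_powStar.1 hst
  have block_eq : ∀ τ ∈ W, ∀ c ∈ ({s, t} : ZFSet), c ∈ τ → τ = τ₁ ∨ τ = τ₂ := by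
    intro τ hτ c hc hcτ
    rcases mem_pair.1 hc with rfl | rfl
    exacts [Or.inl (hS.eq_of_mem_of_mem (hW hτ) hτ₁ hcτ hs),
      Or.inr (hS.eq_of_mem_of_mem (hW hτ) hτ₂ hcτ ht)]
  ext τ
  rw [mem_pair]
  constructor
  · intro hτ
    obtain ⟨c, hc, hcτ⟩ := inter_ne_empty_iff.1 (hmeet τ hτ)
    exact block_eq τ hτ c hc hcτ
  · have block_of_mem : ∀ c ∈ ({s, t} : ZFSet), ∀ τ' ∈ S, c ∈ τ' → τ' ∈ W := by
      intro c hc τ' hτ' hcτ'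
      obtain ⟨τ'', hτ'', hcτ''⟩ := mem_sUnion.1 (hsub hc)
      rwa [hS.eq_of_mem_of_mem hτ' (hW hτ'') hcτ' hcτ'']
    rintro (rfl | rfl)
    exacts [block_of_mem s (mem_pair.2 (Or.inl rfl)) τ hτ₁ hs,
      block_of_mem t (mem_pair.2 (Or.inr rfl)) τ hτ₂ ht]

end IsPartition

/-- For a block `σ` of a transitive partition `S ⊇ Y, Z`, this is equivalent to
`σ ⊆ ⋃₀ Y ⊗ ⋃₀ Z`. -/
def IsOtimesBlock (S Y Z σ : ZFSet) : Prop :=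
  ∅ ∉ σ ∧ ∀ W ⊆ S, (powStar W \ powStar12 W) ∩ σ = ∅ ∧
    (powStar12 W ∩ σ ≠ ∅ → ∃ τ₁ ∈ Y, ∃ τ₂ ∈ Z, W = {τ₁, τ₂})

theorem IsPartition.isOtimesBlock {S X Y Z σ : ZFSet} (hS : IsPartition S) (hY : Y ⊆ S)
    (hZ : Z ⊆ S) (h : ⋃₀ X ⊆ otimes (⋃₀ Y) (⋃₀ Z)) (hσ : σ ∈ X) : IsOtimesBlock S Y Z σ := by
  have hσ_sub : σ ⊆ otimes (⋃₀ Y) (⋃₀ Z) := fun u hu => h (mem_sUnion.2 ⟨σ, hσ, hu⟩)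
  refine ⟨fun h0 => ?_, fun W hW => ⟨(eq_empty _).2 fun u hu => ?_, fun hne => ?_⟩⟩
  · obtain ⟨s, -, t, -, hst⟩ := mem_otimes.1 (hσ_sub h0)
    exact notMem_empty s (hst ▸ mem_pair.2 (Or.inl rfl))
  · obtain ⟨hu, huσ⟩ := mem_inter.1 hu
    obtain ⟨s, -, t, -, rfl⟩ := mem_otimes.1 (hσ_sub huσ)
    exact (mem_sdiff.1 hu).2 (mem_powStar12.2 ⟨(mem_sdiff.1 hu).1, s, t, rfl⟩)
  · obtain ⟨u, hu, huσ⟩ := inter_ne_empty_iff.1 hne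
    obtain ⟨s, hs, t, ht, rfl⟩ := mem_otimes.1 (hσ_sub huσ)
    obtain ⟨τ₁, hτ₁, hsτ₁⟩ := mem_sUnion.1 hs
    obtain ⟨τ₂, hτ₂, htτ₂⟩ := mem_sUnion.1 ht
    exact ⟨τ₁, hτ₁, τ₂, hτ₂,
      hS.eq_pair_of_pair_mem_powStar hW (hY hτ₁) (hZ hτ₂) hsτ₁ htτ₂ (mem_powStar12.1 hu).1⟩

theorem mem_powStar_blocksMeeting {S u : ZFSet} (hS : (⋃₀ S).IsTransitive) (hu : u ∈ ⋃₀ S)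
    (hne : u ≠ ∅) : u ∈ powStar (S.sep (u ∩ · ≠ ∅)) := by
  refine mem_powStar.2 ⟨fun a ha => ?_, hne, fun τ hτ => (mem_sep.1 hτ).2⟩
  obtain ⟨τ, hτ, haτ⟩ := mem_sUnion.1 (hS u hu ha)
  exact mem_sUnion.2 ⟨τ, mem_sep.2 ⟨hτ, inter_ne_empty_iff.2 ⟨a, ha, haτ⟩⟩, haτ⟩

theorem sUnion_subset_otimes_of_isOtimesBlock {S X Y Z : ZFSet} (hS : (⋃₀ S).IsTransitive)
    (hX : X ⊆ S) (h : ∀ σ ∈ X, IsOtimesBlock S Y Z σ) : ⋃₀ X ⊆ otimes (⋃₀ Y) (⋃₀ Z) := by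
  intro u hu
  obtain ⟨σ, hσ, huσ⟩ := mem_sUnion.1 hu
  obtain ⟨h0, hW⟩ := h σ hσ
  have hWS : S.sep (u ∩ · ≠ ∅) ⊆ S := sep_subset
  obtain ⟨hnot12, hpair⟩ := hW _ hWS
  have hu_ps := mem_powStar_blocksMeeting hS (mem_sUnion.2 ⟨σ, hX hσ, huσ⟩)
    (by rintro rfl; exact h0 huσ)
  have hu12 : u ∈ powStar12 (S.sep (u ∩ · ≠ ∅)) := by
    by_contra hu12
    have hu' : u ∈ (powStar _ \ powStar12 _) ∩ σ := mem_inter.2 ⟨mem_sdiff.2 ⟨hu_ps, hu12⟩, huσ⟩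
    rw [hnot12] at hu'
    exact notMem_empty u hu'
  obtain ⟨τ₁, hτ₁, τ₂, hτ₂, hW_eq⟩ := hpair (inter_ne_empty_iff.2 ⟨u, hu12, huσ⟩)
  rw [hW_eq] at hu12
  exact otimes_mono (fun a ha => mem_sUnion.2 ⟨τ₁, hτ₁, ha⟩)
    (fun a ha => mem_sUnion.2 ⟨τ₂, hτ₂, ha⟩) (mem_otimes_of_mem_powStar12_pair hu12)

theorem WCartImitates.isOtimesBlock_image {Sh Sg Y Z σ : ZFSet} {β : ZFSet → ZFSet}
    (hβ : WCartImitates Sh Sg β) (hσ : σ ∈ Sg) (h : IsOtimesBlock Sg Y Z σ) :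
    IsOtimesBlock Sh (zimg β Y) (zimg β Z) (β σ) := by
  obtain ⟨-, -, hβ_surj, hβ_cond⟩ := hβ
  obtain ⟨h0, hW⟩ := h
  refine ⟨fun h0' => h0 ?_, fun W' hW' => ?_⟩
  · -- condition (ii) for the empty family
    have h_ii := (hβ_cond ∅ (empty_subset _) σ hσ).2.1
    rw [zimg_empty, sUnion_empty] at h_ii
    exact h_ii.1 h0'
  obtain ⟨W, hWS, rfl⟩ := exists_subset_zimg_eq hβ_surj hW'
  obtain ⟨-, -, h_iii₁₂, h_iii⟩ := hβ_cond W hWS σ hσ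
  obtain ⟨hnot12, hpair⟩ := hW W hWS
  refine ⟨?_, fun hne => ?_⟩
  · by_contra hne
    exact h_iii.1 hne hnot12
  · obtain ⟨τ₁, hτ₁, τ₂, hτ₂, rfl⟩ := hpair (h_iii₁₂.1 hne)
    exact ⟨β τ₁, mem_zimg.2 ⟨τ₁, hτ₁, rfl⟩, β τ₂, mem_zimg.2 ⟨τ₂, hτ₂, rfl⟩, zimg_pair β τ₁ τ₂⟩

/-- weak cart-imitation transfers the inclusion `⋃X ⊆ ⋃Y ⊗ ⋃Z`. -/
theorem wcart_imitates_otimes_subset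
    (Sg Sh : ZFSet) (hSg : IsTransPartition Sg) (hSh : IsTransPartition Sh)
    (β : ZFSet → ZFSet) (hβ : WCartImitates Sh Sg β) :
    ∀ X Y Z : ZFSet, X ⊆ Sg → Y ⊆ Sg → Z ⊆ Sg →
      (⋃₀ X : ZFSet) ⊆ otimes (⋃₀ Y : ZFSet) (⋃₀ Z : ZFSet) →
      (⋃₀ zimg β X : ZFSet) ⊆ otimes (⋃₀ zimg β Y : ZFSet) (⋃₀ zimg β Z : ZFSet) := by
  intro X Y Z hX hY hZ h
  refine sUnion_subset_otimes_of_isOtimesBlock hSh.2 (zimg_subset hβ.1 hX) fun σ' hσ' => ?_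
  obtain ⟨σ, hσ, rfl⟩ := mem_zimg.1 hσ'
  exact hβ.isOtimesBlock_image (hX hσ) (hSg.1.isOtimesBlock hY hZ h hσ)
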